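/- If r₁, r₂ ∈ ℝ³ are linearly independent unit vectors and k₁, k₂ > 0, then the matrix M = -k₁ (r₁ₓ)² - k₂ (r₂ₓ)² is symmetric and positive definite, where vₓ denotes the skew-symmetric matrix such that vₓ x = v × x for all x. -/

import Mathlib

/-!
Since `skew r` is skew-symmetric, `-(skew r)² = (skew r)ᵀ (skew r)`, so the quadratic form of
`M` is `xᵀ M x = k₁ |r₁ × x|² + k₂ |r₂ × x|² ≥ 0`. It vanishes only if `x` is parallel to both
`r₁` and `r₂`, which for independent `r₁, r₂` forces `x = 0`.
-/

open Matrix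

noncomputable def enorm3 (v : Fin 3 → ℝ) : ℝ := Real.sqrt (v ⬝ᵥ v)

def skew (v : Fin 3 → ℝ) : Matrix (Fin 3) (Fin 3) ℝ :=
  !![0, -v 2, v 1; v 2, 0, -v 0; -v 1, v 0, 0]

theorem Matrix.dotProduct_self_nonneg {R n : Type*} [Fintype n] [Ring R] [LinearOrder R]
    [IsStrictOrderedRing R] (v : n → R) : 0 ≤ v ⬝ᵥ v :=
  Finset.sum_nonneg fun i _ => mul_self_nonneg (v i)

theorem Matrix.dotProduct_self_pos {R n : Type*} [Fintype n] [Ring R] [LinearOrder R]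
    [IsStrictOrderedRing R] {v : n → R} (hv : v ≠ 0) : 0 < v ⬝ᵥ v :=
  (dotProduct_self_nonneg v).lt_of_ne' (dotProduct_self_eq_zero.not.mpr hv)

theorem Matrix.dotProduct_transpose_mul_self_mulVec {R m n : Type*} [CommRing R] [StarRing R]
    [TrivialStar R] [Fintype m] [Fintype n] (A : Matrix m n R) (x : n → R) :
    star x ⬝ᵥ ((Aᵀ * A) *ᵥ x) = (A *ᵥ x) ⬝ᵥ (A *ᵥ x) := by
  rw [star_trivial, ← mulVec_mulVec, dotProduct_mulVec, vecMul_transpose]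

theorem Matrix.posDef_smul_transpose_mul_self_add_smul {R m n p : Type*} [CommRing R]
    [LinearOrder R] [IsStrictOrderedRing R] [StarRing R] [TrivialStar R] [Fintype m] [Fintype n]
    [Fintype p] {A : Matrix m n R} {B : Matrix p n R} {a b : R} (ha : 0 < a) (hb : 0 < b)
    (hAB : ∀ x, A *ᵥ x = 0 → B *ᵥ x = 0 → x = 0) :
    (a • (Aᵀ * A) + b • (Bᵀ * B)).PosDef := by
  have hsymm : (a • (Aᵀ * A) + b • (Bᵀ * B)).IsHermitian := by
    simp [IsHermitian, conjTranspose_eq_transpose_of_trivial, transpose_add, transpose_smul,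
      transpose_mul]
  refine posDef_iff_dotProduct_mulVec.mpr ⟨hsymm, fun x hx => ?_⟩
  rw [add_mulVec, smul_mulVec, smul_mulVec, dotProduct_add, dotProduct_smul, dotProduct_smul,
    dotProduct_transpose_mul_self_mulVec, dotProduct_transpose_mul_self_mulVec, smul_eq_mul,
    smul_eq_mul]
  by_cases hAx : A *ᵥ x = 0
  · have hBx : B *ᵥ x ≠ 0 := fun hBx => hx (hAB x hAx hBx)
    simpa [hAx] using mul_pos hb (dotProduct_self_pos hBx)
  · exact add_pos_of_pos_of_nonneg (mul_pos ha (dotProduct_self_pos hAx))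
      (mul_nonneg hb.le (dotProduct_self_nonneg _))

theorem eq_zero_of_cross_eq_zero_of_linearIndependent {F : Type*} [Field F] {v w x : Fin 3 → F}
    (hvw : LinearIndependent F ![v, w]) (hv : v ⨯₃ x = 0) (hw : w ⨯₃ x = 0) : x = 0 := by
  by_contra hx
  have parallel {u : Fin 3 → F} (hu : u ⨯₃ x = 0) : ∃ c : F, c • x = u := by
    have : ¬LinearIndependent F ![x, u] := by
      rw [← crossProduct_ne_zero_iff_linearIndependent, ← neg_cross, hu, neg_zero, not_not]
    simpa [LinearIndependent.pair_iff' hx] using this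
  obtain ⟨a, rfl⟩ := parallel hv
  obtain ⟨b, rfl⟩ := parallel hw
  have hab := LinearIndependent.pair_iff.mp hvw b (-a)
    (by rw [smul_smul, smul_smul, neg_mul, neg_smul, mul_comm, add_neg_cancel])
  rw [neg_eq_zero.mp hab.2, zero_smul] at hvw
  exact hvw.ne_zero 0 rfl

theorem skew_mulVec (v x : Fin 3 → ℝ) : skew v *ᵥ x = v ⨯₃ x := by
  ext i
  fin_cases i <;> simp [skew, cross_apply, mulVec, dotProduct, Fin.sum_univ_three] <;> ring

theorem transpose_skew (v : Fin 3 → ℝ) : (skew v)ᵀ = -skew v := by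
  ext i j
  fin_cases i <;> fin_cases j <;> simp [skew]

theorem neg_skew_sq (v : Fin 3 → ℝ) : -(skew v ^ 2) = (skew v)ᵀ * skew v := by
  rw [transpose_skew, sq, neg_mul]

theorem stmt0_general (r₁ r₂ : Fin 3 → ℝ) (k₁ k₂ : ℝ)
    (hli : LinearIndependent ℝ ![r₁, r₂]) (hk₁ : 0 < k₁) (hk₂ : 0 < k₂) :
    (-(k₁ • (skew r₁ ^ 2)) - k₂ • (skew r₂ ^ 2)).IsSymm ∧
    (-(k₁ • (skew r₁ ^ 2)) - k₂ • (skew r₂ ^ 2)).PosDef := by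
  have hM : -(k₁ • (skew r₁ ^ 2)) - k₂ • (skew r₂ ^ 2) =
      k₁ • ((skew r₁)ᵀ * skew r₁) + k₂ • ((skew r₂)ᵀ * skew r₂) := by
    rw [← neg_skew_sq, ← neg_skew_sq, smul_neg, smul_neg, sub_eq_add_neg]
  have hpos : (-(k₁ • (skew r₁ ^ 2)) - k₂ • (skew r₂ ^ 2)).PosDef := by
    rw [hM]
    refine posDef_smul_transpose_mul_self_add_smul hk₁ hk₂ fun x h₁ h₂ => ?_
    rw [skew_mulVec] at h₁ h₂
    exact eq_zero_of_cross_eq_zero_of_linearIndependent hli h₁ h₂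
  exact ⟨isHermitian_iff_isSymm.mp hpos.isHermitian, hpos⟩

theorem stmt0 (r₁ r₂ : Fin 3 → ℝ) (k₁ k₂ : ℝ)
    (h₁ : enorm3 r₁ = 1) (h₂ : enorm3 r₂ = 1)
    (hli : LinearIndependent ℝ ![r₁, r₂]) (hk₁ : 0 < k₁) (hk₂ : 0 < k₂) :
    (-(k₁ • (skew r₁ ^ 2)) - k₂ • (skew r₂ ^ 2)).IsSymm ∧
    (-(k₁ • (skew r₁ ^ 2)) - k₂ • (skew r₂ ^ 2)).PosDef :=
  stmt0_general r₁ r₂ k₁ k₂ hli hk₁ hk₂
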